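/- arXiv:1712.03759 — 4 statements merged into one kernel-verified Lean document; each statement's English description precedes it below -/
import Mathlib

section
/- Let ξ : ℤ → {0,1} be a recurrent bi-infinite word (every finite factor of ξ occurs in ξ(-∞,i] and in ξ[i,∞) for every i ∈ ℤ). If some factor u of ξ is right-determining in F(ξ) (i.e., for every k ∈ ℕ there is exactly one word of the form u·v in F(ξ) with |v| = k), then ξ is periodic, i.e., there exists p > 0 with ξ(n) = ξ(n+p) for all n ∈ ℤ. -/
/-- `u` occurs in the bi-infinite word `ξ` starting at position `i`. -/
def FactorAt (ξ : ℤ → Bool) (u : List Bool) (i : ℤ) : Prop :=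
  ∀ k : ℕ, k < u.length → u.getD k false = ξ (i + k)

/-- The set of finite factors of the bi-infinite word `ξ`. -/
def Factors (ξ : ℤ → Bool) : Set (List Bool) :=
  {u | ∃ i : ℤ, FactorAt ξ u i}

/-- `ξ` is recurrent: every factor occurs entirely within `(-∞,i]` and within `[i,∞)`
for every `i`. -/
def Recurrent (ξ : ℤ → Bool) : Prop :=
  ∀ u ∈ Factors ξ, ∀ i : ℤ,
    (∃ j : ℤ, j + u.length ≤ i ∧ FactorAt ξ u j) ∧
    (∃ j : ℤ, i ≤ j ∧ FactorAt ξ u j)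

/-- `ξ` is periodic. -/
def BiPeriodic (ξ : ℤ → Bool) : Prop :=
  ∃ p : ℤ, 0 < p ∧ ∀ n : ℤ, ξ n = ξ (n + p)

/-- `u` is right-determining in `F(ξ)`: for every `k` there is exactly one `v` of
length `k` with `u ++ v ∈ F(ξ)`. -/
def RightDet (ξ : ℤ → Bool) (u : List Bool) : Prop :=
  ∀ k : ℕ, ∃! v : List Bool, v.length = k ∧ u ++ v ∈ Factors ξ

/-- `u` is left-determining in `F(ξ)`. -/
def LeftDet (ξ : ℤ → Bool) (u : List Bool) : Prop :=
  ∀ k : ℕ, ∃! v : List Bool, v.length = k ∧ v ++ u ∈ Factors ξ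

/-!
If `u` occurs at positions `i < j`, right-determinism forces the two occurrences to have the same
continuation, so `ξ` is `(j - i)`-periodic on `[i + |u|, ∞)`. By recurrence every window of `ξ`
reoccurs inside that half-line, so the period propagates to all of `ℤ`.
-/

section Windows

variable {ξ : ℤ → Bool}

def window (ξ : ℤ → Bool) (a : ℤ) (K : ℕ) : List Bool :=
  List.ofFn fun t : Fin K => ξ (a + t)

@[simp]
theorem length_window (a : ℤ) (K : ℕ) : (window ξ a K).length = K :=
  List.length_ofFn

theorem window_add (a : ℤ) (m n : ℕ) :
    window ξ a (m + n) = window ξ a m ++ window ξ (a + m) n := by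
  simp only [window, List.ofFn_add, Fin.val_castLE, Fin.val_natAdd, Nat.cast_add, add_assoc]

theorem window_eq_window_iff {a b : ℤ} {K : ℕ} :
    window ξ a K = window ξ b K ↔ ∀ s < K, ξ (a + s) = ξ (b + s) := by
  simp only [window, List.ofFn_inj, funext_iff, Fin.forall_iff]

theorem factorAt_iff_eq_window {v : List Bool} {a : ℤ} :
    FactorAt ξ v a ↔ v = window ξ a v.length := by
  constructor
  · intro h
    refine List.ext_getElem (length_window a _).symm fun k hk _ => ?_
    simp only [window, List.getElem_ofFn, ← h k hk, List.getD_eq_getElem _ _ hk]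
  · intro h k hk
    rw [h, List.getD_eq_getElem _ _ (by simpa using hk)]
    simp only [window, List.getElem_ofFn]

theorem window_mem_factors (a : ℤ) (K : ℕ) : window ξ a K ∈ Factors ξ :=
  ⟨a, factorAt_iff_eq_window.2 (by rw [length_window])⟩

theorem RightDet.eq_of_factorAt {u : List Bool} {i j : ℤ} (hdet : RightDet ξ u)
    (hi : FactorAt ξ u i) (hj : FactorAt ξ u j) (s : ℕ) :
    ξ (i + u.length + s) = ξ (j + u.length + s) := by
  have extend : ∀ a, FactorAt ξ u a →
      u ++ window ξ (a + u.length) (s + 1) ∈ Factors ξ := fun a ha => by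
    have hu : u = window ξ a u.length := factorAt_iff_eq_window.1 ha
    rw [hu, length_window, ← window_add]
    exact window_mem_factors _ _
  obtain ⟨w, -, hw⟩ := hdet (s + 1)
  have hcont : window ξ (i + u.length) (s + 1) = window ξ (j + u.length) (s + 1) :=
    (hw _ ⟨length_window _ _, extend i hi⟩).trans (hw _ ⟨length_window _ _, extend j hj⟩).symm
  exact window_eq_window_iff.1 hcont s s.lt_succ_self

theorem Recurrent.periodic_of_eventually_periodic (hrec : Recurrent ξ) {N : ℤ} {p : ℕ}
    (htail : ∀ m, N ≤ m → ξ m = ξ (m + p)) (n : ℤ) : ξ n = ξ (n + p) := by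
  obtain ⟨-, m, hNm, hm⟩ := hrec _ (window_mem_factors n (p + 1)) N
  rw [factorAt_iff_eq_window, length_window, window_eq_window_iff] at hm
  have h0 := hm 0 p.succ_pos
  have hp := hm p p.lt_succ_self
  simp only [Nat.cast_zero, add_zero] at h0
  rw [h0, hp]
  exact htail m hNm

end Windows

theorem right_determining_implies_periodic (ξ : ℤ → Bool) (hrec : Recurrent ξ)
    (u : List Bool) (hu : u ∈ Factors ξ) (hdet : RightDet ξ u) :
    BiPeriodic ξ := by
  obtain ⟨i, hi⟩ := hu
  obtain ⟨-, j, hij, hj⟩ := hrec u ⟨i, hi⟩ (i + 1)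
  obtain ⟨k, rfl⟩ := Int.le.dest hij
  refine ⟨(k + 1 : ℕ), by positivity,
    hrec.periodic_of_eventually_periodic (N := i + u.length) fun m hm => ?_⟩
  obtain ⟨s, rfl⟩ := Int.le.dest hm
  convert hdet.eq_of_factorAt hi hj s using 2
  push_cast
  ring
end

section
/- If ξ : ℤ → {0,1} is a periodic bi-infinite word with period p (the least p > 0 such that ξ(n) = ξ(n+p) for all n), then the factor u = ξ(1)ξ(2)⋯ξ(p) of length p is both left-determining and right-determining in F(ξ). -/
open Function

def factorWord (ξ : ℤ → Bool) (i : ℤ) (n : ℕ) : List Bool :=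
  (List.range n).map fun k : ℕ => ξ (i + k)

section FactorWord

variable {ξ : ℤ → Bool} {u v : List Bool} {i : ℤ}

@[simp]
lemma length_factorWord (ξ : ℤ → Bool) (i : ℤ) (n : ℕ) : (factorWord ξ i n).length = n := by
  simp [factorWord]

lemma factorWord_add (ξ : ℤ → Bool) (i : ℤ) (m n : ℕ) :
    factorWord ξ i (m + n) = factorWord ξ i m ++ factorWord ξ (i + m) n := by
  simp [factorWord, List.range_add, add_assoc]

lemma factorAt_iff_eq_factorWord : FactorAt ξ u i ↔ u = factorWord ξ i u.length := by
  constructor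
  · intro h
    refine List.ext_getElem (by simp) fun k hk _ => ?_
    rw [← List.getD_eq_getElem _ false hk, h k hk]
    simp [factorWord]
  · intro h k hk
    rw [List.getD_eq_getElem _ _ hk, List.getElem_of_eq h]
    simp [factorWord]

lemma factorWord_mem_factors (ξ : ℤ → Bool) (i : ℤ) (n : ℕ) : factorWord ξ i n ∈ Factors ξ :=
  ⟨i, by rw [factorAt_iff_eq_factorWord, length_factorWord]⟩

lemma exists_eq_factorWord_of_append_mem_factors (h : u ++ v ∈ Factors ξ) :
    ∃ j, u = factorWord ξ j u.length ∧ v = factorWord ξ (j + u.length) v.length := by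
  obtain ⟨j, hj⟩ := h
  rw [factorAt_iff_eq_factorWord, List.length_append, factorWord_add] at hj
  exact ⟨j, List.append_inj hj (by simp)⟩

lemma Function.Periodic.factorWord_add_period {d : ℤ} (h : Periodic ξ d) (i : ℤ) (n : ℕ) :
    factorWord ξ (i + d) n = factorWord ξ i n := by
  simp only [factorWord, add_right_comm i d, show ∀ x, ξ (x + d) = ξ x from h]

end FactorWord

lemma Function.Periodic.sub_of_factorWord_eq {ξ : ℤ → Bool} {p : ℕ} {i j : ℤ}
    (hξ : Periodic ξ p) (hp : 0 < p) (h : factorWord ξ j p = factorWord ξ i p) :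
    Periodic ξ (j - i) := by
  have hwindow : ∀ r : ℕ, r < p → ξ (j + r) = ξ (i + r) := by
    simpa [factorWord, List.map_inj_left] using h
  intro n
  obtain ⟨r, hr⟩ : ∃ r : ℕ, (r : ℤ) = (n - i) % p :=
    ⟨_, Int.toNat_of_nonneg (Int.emod_nonneg _ (by omega))⟩
  have hrp : r < p := by
    have := Int.emod_lt_of_pos (n - i) (by omega : (0 : ℤ) < p)
    omega
  set q := (n - i) / p
  have hn : n = i + r + q * p := by
    have := Int.emod_add_ediv_mul (n - i) p
    rw [hr]; linarith
  have hqp : Periodic ξ (q * p) := by simpa using hξ.int_mul q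
  calc ξ (n + (j - i)) = ξ (j + r + q * p) := by rw [hn]; ring_nf
    _ = ξ (i + r + q * p) := by rw [hqp, hqp, hwindow r hrp]
    _ = ξ n := by rw [← hn]

section Determining

variable {ξ : ℤ → Bool} {i : ℤ} {n : ℕ}

lemma rightDet_factorWord
    (hocc : ∀ j, factorWord ξ j n = factorWord ξ i n → Periodic ξ (j - i)) :
    RightDet ξ (factorWord ξ i n) := by
  intro k
  refine ⟨factorWord ξ (i + n) k, ⟨length_factorWord .., ?_⟩, ?_⟩
  · rw [← factorWord_add]
    exact factorWord_mem_factors ..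
  · rintro w ⟨rfl, hw⟩
    obtain ⟨j, hu, hw⟩ := exists_eq_factorWord_of_append_mem_factors hw
    rw [length_factorWord] at hu hw
    refine hw.trans ?_
    rw [show j + n = i + n + (j - i) by ring, (hocc j hu.symm).factorWord_add_period]

lemma leftDet_factorWord
    (hocc : ∀ j, factorWord ξ j n = factorWord ξ i n → Periodic ξ (j - i)) :
    LeftDet ξ (factorWord ξ i n) := by
  intro k
  refine ⟨factorWord ξ (i - k) k, ⟨length_factorWord .., ?_⟩, ?_⟩
  · have h := factorWord_add ξ (i - k) k n
    rw [sub_add_cancel] at h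
    rw [← h]
    exact factorWord_mem_factors ..
  · rintro w ⟨rfl, hw⟩
    obtain ⟨j, hw, hu⟩ := exists_eq_factorWord_of_append_mem_factors hw
    rw [length_factorWord] at hu
    refine hw.trans ?_
    rw [show j = i - w.length + (j + w.length - i) by ring,
      (hocc _ hu.symm).factorWord_add_period]

end Determining

theorem period_word_is_determining_general (ξ : ℤ → Bool) (p : ℕ) (hp : 0 < p)
    (hper : ∀ n : ℤ, ξ n = ξ (n + (p : ℤ))) :
    LeftDet ξ ((List.range p).map fun k => ξ (1 + k)) ∧
    RightDet ξ ((List.range p).map fun k => ξ (1 + k)) := by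
  have hξ : Periodic ξ p := fun n => (hper n).symm
  -- In the statement `List.range p` is coerced to `List ℤ`, which unfolds to a `flatMap`.
  have hu : ((List.range p).map fun k => ξ (1 + k)) = factorWord ξ 1 p := by
    simp [factorWord, ← List.map_eq_flatMap]
  have hocc j (h : factorWord ξ j p = factorWord ξ 1 p) := hξ.sub_of_factorWord_eq hp h
  rw [hu]
  exact ⟨leftDet_factorWord hocc, rightDet_factorWord hocc⟩

theorem period_word_is_determining (ξ : ℤ → Bool) (p : ℕ) (hp : 0 < p)
    (hper : ∀ n : ℤ, ξ n = ξ (n + (p : ℤ)))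
    (hleast : ∀ q : ℕ, 0 < q → (∀ n : ℤ, ξ n = ξ (n + (q : ℤ))) → p ≤ q) :
    LeftDet ξ ((List.range p).map fun k => ξ (1 + k)) ∧
    RightDet ξ ((List.range p).map fun k => ξ (1 + k)) :=
  period_word_is_determining_general ξ p hp hper
end

section
/- Let L ⊆ {0,1}* be a set of finite words such that (a) L contains a non-empty word, (b) L is closed under factors (if uvw ∈ L then v ∈ L), and (c) for all u, w ∈ L there exists v ∈ {0,1}* with uvw ∈ L. Then there exists a recurrent bi-infinite word ξ : ℤ → {0,1} with F(ξ) = L. -/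
/-!
Enumerate `L` as `t₀, t₁, …` and start from a non-empty `W₀ ∈ L`. Applying (c) three times gives
`W_{n+1} = W_n m_n W_n m'_n W_n ∈ L` with `t_n` a factor of `m_n`. Placing each `W_n` on the
middle copy of `W_n` inside `W_{n+1}` gives consistent placements that grow by at least one letter
on each side, so they converge to a bi-infinite word `ξ` whose factors are exactly the factors of
the `W_n`, that is `L` by (b). Since `W_N` is a prefix and a suffix of every later `W_n`, each
factor of `ξ` occurs near both ends of the placed `W_n`, hence arbitrarily far to the left and to
the right.
-/

open Filter

def segmentAt (ξ : ℤ → Bool) (i : ℤ) (n : ℕ) : List Bool :=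
  (List.range n).map fun k : ℕ => ξ (i + k)

variable {ξ : ℤ → Bool}

@[simp]
lemma length_segmentAt (i : ℤ) (n : ℕ) : (segmentAt ξ i n).length = n := by
  simp [segmentAt]

lemma segmentAt_add (i : ℤ) (a b : ℕ) :
    segmentAt ξ i (a + b) = segmentAt ξ i a ++ segmentAt ξ (i + a) b := by
  simp [segmentAt, List.range_add, add_assoc]

lemma factorAt_iff_segmentAt_eq {u : List Bool} {i : ℤ} :
    FactorAt ξ u i ↔ segmentAt ξ i u.length = u := by
  simp only [FactorAt, List.ext_getElem_iff, length_segmentAt, true_and]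
  refine forall_congr' fun k => ?_
  simp only [segmentAt, List.getElem_map, List.getElem_range]
  exact ⟨fun h hk _ => (List.getD_eq_getElem _ _ hk ▸ h hk).symm,
    fun h hk => List.getD_eq_getElem _ _ hk ▸ (h hk hk).symm⟩

namespace FactorAt

variable {u w : List Bool} {i j : ℤ}

lemma of_append_append {p q : List Bool} (h : FactorAt ξ (p ++ u ++ q) i) :
    FactorAt ξ u (i + p.length) := by
  rw [factorAt_iff_segmentAt_eq, List.length_append, List.length_append, segmentAt_add,
    segmentAt_add] at h
  rw [factorAt_iff_segmentAt_eq]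
  exact (List.append_inj (List.append_inj h (by simp)).1 (by simp)).2

lemma exists_of_isInfix (hw : FactorAt ξ w j) (huw : u <:+: w) :
    ∃ i, j ≤ i ∧ i + u.length ≤ j + w.length ∧ FactorAt ξ u i := by
  obtain ⟨p, q, rfl⟩ := huw
  exact ⟨j + p.length, by omega, by simp; omega, hw.of_append_append⟩

lemma isInfix_of_le (hw : FactorAt ξ w j) (hu : FactorAt ξ u i) (hji : j ≤ i)
    (hij : i + u.length ≤ j + w.length) : u <:+: w := by
  obtain ⟨a, rfl⟩ : ∃ a : ℕ, i = j + a := ⟨(i - j).toNat, by omega⟩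
  obtain ⟨c, hc⟩ : ∃ c, w.length = a + u.length + c := ⟨w.length - a - u.length, by omega⟩
  rw [factorAt_iff_segmentAt_eq] at hw hu
  rw [← hw, hc, segmentAt_add, segmentAt_add, hu]
  exact List.infix_append _ _ _

lemma of_isPrefix (hw : FactorAt ξ w j) (huw : u <+: w) : FactorAt ξ u j := by
  obtain ⟨s, rfl⟩ := huw
  have hw' : FactorAt ξ ([] ++ u ++ s) j := by simpa using hw
  simpa using hw'.of_append_append

lemma of_isSuffix (hw : FactorAt ξ w j) (huw : u <:+ w) :
    FactorAt ξ u (j + w.length - u.length) := by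
  obtain ⟨s, rfl⟩ := huw
  rw [← List.append_nil (s ++ u)] at hw
  convert hw.of_append_append using 1
  simp only [List.length_append]
  push_cast
  ring

lemma apply_eq_getD (hw : FactorAt ξ w j) (hji : j ≤ i) (hij : i < j + w.length) :
    ξ i = w.getD (i - j).toNat false := by
  rw [hw _ (by omega)]
  congr 1
  omega

end FactorAt

theorem exists_factorAt_of_tendsto (W : ℕ → List Bool) (l : ℕ → ℤ)
    (hnest : ∀ n ξ, FactorAt ξ (W (n + 1)) (l (n + 1)) → FactorAt ξ (W n) (l n))
    (hl : Tendsto l atTop atBot) (hr : Tendsto (fun n => l n + (W n).length) atTop atTop) :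
    ∃ ξ, ∀ n, FactorAt ξ (W n) (l n) := by
  have hmono : ∀ ξ {m n}, m ≤ n → FactorAt ξ (W n) (l n) → FactorAt ξ (W m) (l m) := by
    intro ξ m n hmn
    induction n, hmn using Nat.le_induction with
    | base => exact id
    | succ n _ ih => exact fun h => ih (hnest n ξ h)
  have hcover : ∀ i : ℤ, ∃ N, l N ≤ i ∧ i < l N + (W N).length := fun i =>
    ((hl.eventually (eventually_le_atBot i)).and (hr.eventually (eventually_gt_atTop i))).exists
  choose N hN using hcover
  -- `ξ i` is read off any placement covering `i`; by `hmono` they all agree there.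
  let place (n : ℕ) (i : ℤ) : Bool := (W n).getD (i - l n).toNat false
  have hplace : ∀ n, FactorAt (place n) (W n) (l n) := fun n k _ => by simp [place]
  refine ⟨fun i => place (N i) i, fun n k hk => ?_⟩
  have hM := hplace (max n (N (l n + k)))
  rw [hmono _ (le_max_left _ _) hM k hk]
  exact (hmono _ (le_max_right _ _) hM).apply_eq_getD (hN _).1 (hN _).2

theorem exists_factorAt_of_eq_append_append (W p q : ℕ → List Bool)
    (hW : ∀ n, W (n + 1) = p n ++ W n ++ q n) (hp : ∀ n, p n ≠ []) (hq : ∀ n, q n ≠ []) :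
    ∃ (ξ : ℤ → Bool) (l : ℕ → ℤ), (∀ n, FactorAt ξ (W n) (l n)) ∧
      Tendsto l atTop atBot ∧ Tendsto (fun n => l n + (W n).length) atTop atTop := by
  let l (n : ℕ) : ℤ := -∑ k ∈ Finset.range n, ((p k).length : ℤ)
  have hl_succ (n : ℕ) : l (n + 1) + (p n).length = l n := by
    simp [l, Finset.sum_range_succ]
  have hr_succ (n : ℕ) :
      l (n + 1) + (W (n + 1)).length = l n + (W n).length + (q n).length := by
    rw [← hl_succ n, hW]
    simp only [List.length_append]
    push_cast
    ring
  have hl_le (n : ℕ) : l n ≤ -n := by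
    induction n with
    | zero => simp [l]
    | succ n ih =>
      have := hl_succ n
      have := List.length_pos_iff.2 (hp n)
      push_cast
      omega
  have hr_ge (n : ℕ) : (n : ℤ) ≤ l n + (W n).length := by
    induction n with
    | zero => simp [l]
    | succ n ih =>
      have := hr_succ n
      have := List.length_pos_iff.2 (hq n)
      push_cast
      omega
  have hl : Tendsto l atTop atBot :=
    tendsto_atBot_mono hl_le (tendsto_neg_atTop_atBot.comp tendsto_natCast_atTop_atTop)
  have hr : Tendsto (fun n => l n + (W n).length) atTop atTop :=
    tendsto_atTop_mono hr_ge tendsto_natCast_atTop_atTop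
  obtain ⟨ξ, hξ⟩ := exists_factorAt_of_tendsto W l
    (fun n ξ h => hl_succ n ▸ (hW n ▸ h).of_append_append) hl hr
  exact ⟨ξ, l, hξ, hl, hr⟩

theorem factors_eq_setOf_isInfix {W : ℕ → List Bool} {l : ℕ → ℤ}
    (hξ : ∀ n, FactorAt ξ (W n) (l n)) (hl : Tendsto l atTop atBot)
    (hr : Tendsto (fun n => l n + (W n).length) atTop atTop) :
    Factors ξ = {u | ∃ n, u <:+: W n} := by
  ext u
  constructor
  · rintro ⟨i, hu⟩
    obtain ⟨n, hln, hrn⟩ := ((hl.eventually (eventually_le_atBot i)).and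
      (hr.eventually (eventually_ge_atTop (i + u.length)))).exists
    exact ⟨n, (hξ n).isInfix_of_le hu hln hrn⟩
  · rintro ⟨n, hun⟩
    obtain ⟨i, -, -, hu⟩ := (hξ n).exists_of_isInfix hun
    exact ⟨i, hu⟩

theorem recurrent_of_isPrefix_of_isSuffix {W : ℕ → List Bool} {l : ℕ → ℤ}
    (hξ : ∀ n, FactorAt ξ (W n) (l n)) (hl : Tendsto l atTop atBot)
    (hr : Tendsto (fun n => l n + (W n).length) atTop atTop) (hpre : ∀ m n, m ≤ n → W m <+: W n)
    (hsuf : ∀ m n, m ≤ n → W m <:+ W n) : Recurrent ξ := by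
  intro u hu i
  obtain ⟨m, hum⟩ := (factors_eq_setOf_isInfix hξ hl hr).subset hu
  constructor
  · obtain ⟨n, hmn, hn⟩ := ((eventually_ge_atTop m).and
      (hl.eventually (eventually_le_atBot (i - (W m).length)))).exists
    obtain ⟨j, -, hj, hu⟩ := ((hξ n).of_isPrefix (hpre m n hmn)).exists_of_isInfix hum
    exact ⟨j, by omega, hu⟩
  · obtain ⟨n, hmn, hn⟩ := ((eventually_ge_atTop m).and
      (hr.eventually (eventually_ge_atTop (i + (W m).length)))).exists
    obtain ⟨j, hj, -, hu⟩ := ((hξ n).of_isSuffix (hsuf m n hmn)).exists_of_isInfix hum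
    exact ⟨j, by omega, hu⟩

theorem exists_recurrent_factors_eq_setOf_isInfix (W m m' : ℕ → List Bool) (hW₀ : W 0 ≠ [])
    (hW : ∀ n, W (n + 1) = W n ++ m n ++ W n ++ m' n ++ W n) :
    ∃ ξ, Recurrent ξ ∧ Factors ξ = {u | ∃ n, u <:+: W n} := by
  have hpre : ∀ k n, k ≤ n → W k <+: W n := fun _ _ hkn =>
    Nat.rel_of_forall_rel_succ_of_le (· <+: ·)
      (fun n => ⟨m n ++ W n ++ m' n ++ W n, by simp [hW]⟩) hkn
  have hsuf : ∀ k n, k ≤ n → W k <:+ W n := fun _ _ hkn =>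
    Nat.rel_of_forall_rel_succ_of_le (· <:+ ·)
      (fun n => ⟨W n ++ m n ++ W n ++ m' n, by simp [hW]⟩) hkn
  have hne (n : ℕ) : W n ≠ [] := fun h => hW₀ (List.prefix_nil.1 (h ▸ hpre 0 n n.zero_le))
  obtain ⟨ξ, l, hξ, hl, hr⟩ := exists_factorAt_of_eq_append_append W
    (fun n => W n ++ m n) (fun n => m' n ++ W n) (fun n => by simp [hW]) (by simp [hne])
    (by simp [hne])
  exact ⟨ξ, recurrent_of_isPrefix_of_isSuffix hξ hl hr hpre hsuf,
    factors_eq_setOf_isInfix hξ hl hr⟩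

theorem exists_seq_eq_append_append {α : Type*} {L : Set (List α)}
    (hL : ∀ u ∈ L, ∀ w ∈ L, ∃ v, u ++ v ++ w ∈ L) (t : ℕ → List α) (ht : ∀ n, t n ∈ L)
    {w₀ : List α} (hw₀ : w₀ ∈ L) :
    ∃ W m m' : ℕ → List α, W 0 = w₀ ∧ (∀ n, W n ∈ L) ∧
      (∀ n, W (n + 1) = W n ++ m n ++ W n ++ m' n ++ W n) ∧ ∀ n, t n <:+: m n := by
  have step (x : L) (n : ℕ) : ∃ m m', x.1 ++ m ++ x ++ m' ++ x ∈ L ∧ t n <:+: m := by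
    obtain ⟨a, ha⟩ := hL x x.2 (t n) (ht n)
    obtain ⟨b, hb⟩ := hL _ ha x x.2
    obtain ⟨c, hc⟩ := hL _ hb x x.2
    exact ⟨a ++ t n ++ b, c, by simpa using hc, List.infix_append _ _ _⟩
  choose m m' hmem hinf using step
  let V (n : ℕ) : L :=
    Nat.rec ⟨w₀, hw₀⟩ (fun n x => ⟨x.1 ++ m x n ++ x ++ m' x n ++ x, hmem x n⟩) n
  exact ⟨fun n => (V n).1, fun n => m (V n) n, fun n => m' (V n) n, rfl, fun n => (V n).2,
    fun _ => rfl, fun n => hinf _ n⟩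

theorem exists_recurrent_word_with_factor_set (L : Set (List Bool))
    (ha : ∃ u ∈ L, u ≠ [])
    (hb : ∀ u v w : List Bool, u ++ v ++ w ∈ L → v ∈ L)
    (hc : ∀ u ∈ L, ∀ w ∈ L, ∃ v : List Bool, u ++ v ++ w ∈ L) :
    ∃ ξ : ℤ → Bool, Recurrent ξ ∧ Factors ξ = L := by
  obtain ⟨w₀, hw₀, hw₀_ne⟩ := ha
  obtain ⟨t, rfl⟩ := (Set.to_countable L).exists_eq_range ⟨w₀, hw₀⟩
  obtain ⟨W, m, m', rfl, hWL, hW, htm⟩ :=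
    exists_seq_eq_append_append hc t Set.mem_range_self hw₀
  obtain ⟨ξ, hrec, hξ⟩ := exists_recurrent_factors_eq_setOf_isInfix W m m' hw₀_ne hW
  refine ⟨ξ, hrec, hξ.trans (Set.Subset.antisymm ?_ ?_)⟩
  · rintro u ⟨n, p, q, hpq⟩
    exact hb p u q (hpq ▸ hWL n)
  · rintro _ ⟨n, rfl⟩
    have hm : m n <:+: W (n + 1) := ⟨W n, W n ++ m' n ++ W n, by simp [hW]⟩
    exact ⟨n + 1, (htm n).trans hm⟩
end

section
/- Let ξ : ℤ → {0,1} be a recurrent non-periodic bi-infinite word and fix a surjection f : ℕ → F(ξ). For every set A ⊆ ℕ there exists a recurrent bi-infinite word ξ_A with F(ξ_A) = F(ξ), and the map A ↦ ξ_A is injective. Consequently there are at least 2^{ℵ₀} recurrent bi-infinite words with the same factor set as ξ. -/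
/-!
If a factor `u` of the recurrent word `ξ` had no right special extension `u ++ x` (one followed
by both letters), all occurrences of `u` would be followed by the same infinite word; an
occurrence of `u` to the right of another one, together with occurrences arbitrarily far to the
left, would then make `ξ` periodic. Recurrence also joins any two factors, `t ++ x ++ w`.

Starting from the empty word, step `n` turns the current factor `w` into
`p ++ w ++ s ++ [b]`, where `p ≠ []` and `s` both contain the `n`-th factor of an enumeration
visiting every factor infinitely often, `p ++ w ++ s` is right special, and `b` records whether
`n ∈ A`. The words grow in both directions and converge to `ξ_A`: its factors lie inside the
stages, every factor of `ξ` occurs in it arbitrarily far to the left and to the right, and the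
letters `b` recover `A`.
-/

def wordAt (ξ : ℤ → Bool) (i : ℤ) (n : ℕ) : List Bool :=
  List.ofFn fun k : Fin n => ξ (i + k)

def RightSpecial (ξ : ℤ → Bool) (w : List Bool) : Prop :=
  ∀ b, w ++ [b] ∈ Factors ξ

section Factors

variable {ξ : ℤ → Bool} {u v w : List Bool} {i j : ℤ}

@[simp]
theorem length_wordAt (ξ : ℤ → Bool) (i : ℤ) (n : ℕ) : (wordAt ξ i n).length = n :=
  List.length_ofFn

theorem factorAt_wordAt (ξ : ℤ → Bool) (i : ℤ) (n : ℕ) : FactorAt ξ (wordAt ξ i n) i := by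
  intro k hk
  simp only [length_wordAt] at hk
  simp [wordAt, hk]

theorem FactorAt.eq_wordAt (h : FactorAt ξ u i) : u = wordAt ξ i u.length :=
  List.ext_getElem (by simp) fun k hk _ => by
    simp [wordAt, ← h k hk, List.getD_eq_getElem?_getD, hk]

theorem factorAt_append_iff :
    FactorAt ξ (u ++ v) i ↔ FactorAt ξ u i ∧ FactorAt ξ v (i + u.length) := by
  constructor
  · intro h
    refine ⟨fun k hk => ?_, fun k hk => ?_⟩
    · rw [← List.getD_append u v _ k hk]
      exact h k (by simp; omega)
    · have := h (u.length + k) (by simp; omega)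
      rw [List.getD_append_right _ _ _ _ (by omega), Nat.add_sub_cancel_left] at this
      rw [this]
      congr 1
      push_cast
      ring
  · rintro ⟨hu, hv⟩ k hk
    rcases lt_or_ge k u.length with hk' | hk'
    · rw [List.getD_append _ _ _ _ hk']
      exact hu k hk'
    · rw [List.getD_append_right _ _ _ _ hk', hv _ (by simp at hk; omega)]
      congr 1
      omega

theorem wordAt_add (ξ : ℤ → Bool) (i : ℤ) (m n : ℕ) :
    wordAt ξ i (m + n) = wordAt ξ i m ++ wordAt ξ (i + m) n := by
  have h : FactorAt ξ (wordAt ξ i m ++ wordAt ξ (i + m) n) i := by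
    rw [factorAt_append_iff, length_wordAt]
    exact ⟨factorAt_wordAt ξ i m, factorAt_wordAt ξ (i + m) n⟩
  simpa using h.eq_wordAt.symm

theorem wordAt_succ (ξ : ℤ → Bool) (i : ℤ) (n : ℕ) :
    wordAt ξ i (n + 1) = wordAt ξ i n ++ [ξ (i + n)] := by
  rw [wordAt_add]
  simp [wordAt]

theorem FactorAt.exists_factorAt_of_isInfix (hu : FactorAt ξ u i) (h : v <:+: u) :
    ∃ j, i ≤ j ∧ j + v.length ≤ i + u.length ∧ FactorAt ξ v j := by
  obtain ⟨s, t, rfl⟩ := h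
  rw [factorAt_append_iff, factorAt_append_iff] at hu
  exact ⟨i + s.length, by omega, by simp; omega, hu.1.2⟩

theorem mem_factors_of_isInfix (hu : u ∈ Factors ξ) (h : v <:+: u) : v ∈ Factors ξ := by
  obtain ⟨_, hi⟩ := hu
  obtain ⟨j, -, -, hj⟩ := hi.exists_factorAt_of_isInfix h
  exact ⟨j, hj⟩

theorem FactorAt.wordAt_isInfix (hw : FactorAt ξ w i) (hij : i ≤ j) (n : ℕ)
    (hn : j + n ≤ i + w.length) : wordAt ξ j n <:+: w := by
  obtain ⟨a, rfl⟩ : ∃ a : ℕ, j = i + a := ⟨(j - i).toNat, by omega⟩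
  obtain ⟨b, hb⟩ : ∃ b : ℕ, w.length = a + n + b := ⟨w.length - (a + n), by omega⟩
  rw [hw.eq_wordAt, hb, wordAt_add, wordAt_add]
  exact List.infix_append _ _ _

theorem exists_cons_mem_factors (hw : w ∈ Factors ξ) : ∃ c, c :: w ∈ Factors ξ := by
  obtain ⟨i, hi⟩ := hw
  refine ⟨ξ (i - 1), i - 1, ?_⟩
  rw [← List.singleton_append, factorAt_append_iff]
  refine ⟨fun k hk => ?_, by simpa using hi⟩
  obtain rfl : k = 0 := by simpa using hk
  simp

theorem Recurrent.exists_append_append_mem_factors (hrec : Recurrent ξ) (hu : u ∈ Factors ξ)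
    (hv : v ∈ Factors ξ) : ∃ x, u ++ x ++ v ∈ Factors ξ := by
  obtain ⟨i, hi⟩ := hv
  obtain ⟨j, hji, hj⟩ := (hrec u hu i).1
  refine ⟨wordAt ξ (j + u.length) (i - (j + u.length)).toNat, j, ?_⟩
  rw [factorAt_append_iff, factorAt_append_iff]
  refine ⟨⟨hj, factorAt_wordAt _ _ _⟩, ?_⟩
  convert hi using 2
  simp only [List.length_append, length_wordAt]
  omega

end Factors

section RightSpecial

variable {ξ : ℤ → Bool} {t u w : List Bool} {j j' : ℤ}

theorem eq_of_factorAt_of_forall_not_rightSpecial (hns : ∀ x, ¬ RightSpecial ξ (u ++ x))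
    (hj : FactorAt ξ u j) (hj' : FactorAt ξ u j') (n : ℕ) : ξ (j + n) = ξ (j' + n) := by
  suffices h : ∀ n, wordAt ξ j n = wordAt ξ j' n by
    have h' := h (n + 1)
    rw [wordAt_succ, wordAt_succ] at h'
    simpa using List.append_inj_right' h' rfl
  intro n
  induction n with
  | zero => rfl
  | succ n ih =>
    rw [wordAt_succ, wordAt_succ, ih]
    congr 2
    rcases lt_or_ge n u.length with hn | hn
    · rw [← hj n hn, ← hj' n hn]
    · set x := wordAt ξ (j + u.length) (n - u.length)
      have hx : wordAt ξ j' n = u ++ x := by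
        rw [← ih, hj.eq_wordAt, ← wordAt_add, Nat.add_sub_cancel' hn]
      have hmem : ∀ i, wordAt ξ i n = u ++ x → u ++ x ++ [ξ (i + n)] ∈ Factors ξ := by
        intro i hi
        rw [← hi, ← wordAt_succ]
        exact ⟨i, factorAt_wordAt ξ i (n + 1)⟩
      -- different letters after the two occurrences of `u ++ x` would make it right special
      by_contra hne
      refine hns x fun b => ?_
      obtain rfl | rfl : b = ξ (j + n) ∨ b = ξ (j' + n) := by
        revert hne; cases b <;> cases ξ (j + n) <;> cases ξ (j' + n) <;> simp
      · exact hmem j (ih.trans hx)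
      · exact hmem j' hx

theorem Recurrent.biPeriodic_of_eq_of_factorAt (hrec : Recurrent ξ) (hu : u ∈ Factors ξ)
    (h : ∀ j j', FactorAt ξ u j → FactorAt ξ u j' → ∀ n : ℕ, ξ (j + n) = ξ (j' + n)) :
    BiPeriodic ξ := by
  obtain ⟨j₀, hj₀⟩ := hu
  obtain ⟨j₁, hj₀₁, hj₁⟩ := (hrec u ⟨j₀, hj₀⟩ (j₀ + 1)).2
  refine ⟨j₁ - j₀, by omega, fun m => ?_⟩
  obtain ⟨j, hjm, hj⟩ := (hrec u ⟨j₀, hj₀⟩ m).1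
  obtain ⟨n, rfl⟩ : ∃ n : ℕ, m = j + n := ⟨(m - j).toNat, by omega⟩
  obtain ⟨q, hq⟩ : ∃ q : ℕ, j₁ - j₀ = q := ⟨(j₁ - j₀).toNat, by omega⟩
  calc ξ (j + n) = ξ (j₁ + n) := h j j₁ hj hj₁ n
    _ = ξ (j₀ + (n + q : ℕ)) := by push_cast; congr 1; omega
    _ = ξ (j + n + (j₁ - j₀)) := by rw [h j₀ j hj₀ hj]; push_cast; congr 1; omega

theorem Recurrent.exists_rightSpecial_append (hrec : Recurrent ξ) (hnp : ¬ BiPeriodic ξ)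
    (hu : u ∈ Factors ξ) : ∃ x, RightSpecial ξ (u ++ x) := by
  by_contra! hns
  exact hnp <| hrec.biPeriodic_of_eq_of_factorAt hu fun _ _ hj hj' =>
    eq_of_factorAt_of_forall_not_rightSpecial hns hj hj'

end RightSpecial

structure IsBranchingExtension (ξ : ℤ → Bool) (t w p s : List Bool) : Prop where
  ne_nil : p ≠ []
  isInfix_left : t <:+: p
  isInfix_right : t <:+: s
  rightSpecial : RightSpecial ξ (p ++ w ++ s)

theorem Recurrent.exists_isBranchingExtension {ξ : ℤ → Bool} {t w : List Bool}
    (hrec : Recurrent ξ) (hnp : ¬ BiPeriodic ξ) (ht : t ∈ Factors ξ) (hw : w ∈ Factors ξ) :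
    ∃ p s, IsBranchingExtension ξ t w p s := by
  obtain ⟨v₁, hv₁⟩ := hrec.exists_append_append_mem_factors ht hw
  obtain ⟨c, hc⟩ := exists_cons_mem_factors hv₁
  obtain ⟨v₂, hv₂⟩ := hrec.exists_append_append_mem_factors (u := c :: (t ++ v₁) ++ w)
    (by simpa using hc) ht
  obtain ⟨x, hx⟩ := hrec.exists_rightSpecial_append hnp hv₂
  exact ⟨c :: (t ++ v₁), v₂ ++ t ++ x, List.cons_ne_nil _ _, ⟨[c], v₁, by simp⟩,
    List.infix_append _ _ _, by simpa using hx⟩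

def IsBranchingExtender (ξ : ℤ → Bool) (pre suf : List Bool → List Bool → List Bool) : Prop :=
  ∀ t w, t ∈ Factors ξ → w ∈ Factors ξ → IsBranchingExtension ξ t w (pre t w) (suf t w)

theorem Recurrent.exists_isBranchingExtender {ξ : ℤ → Bool} (hrec : Recurrent ξ)
    (hnp : ¬ BiPeriodic ξ) : ∃ pre suf, IsBranchingExtender ξ pre suf := by
  choose! pre suf h using fun t w (ht : t ∈ Factors ξ) (hw : w ∈ Factors ξ) =>
    hrec.exists_isBranchingExtension hnp ht hw
  exact ⟨pre, suf, h⟩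

section PrefixLimit

variable {α : Type*} [Inhabited α] {W : ℕ → List α}

/-- The limit of a sequence of lists increasing for the prefix order and of unbounded length. -/
def prefixLimit (W : ℕ → List α) (k : ℕ) : α :=
  (W (k + 1)).getD k default

theorem getD_eq_prefixLimit (hmono : ∀ n, W n <+: W (n + 1)) (hlen : ∀ n, n ≤ (W n).length)
    {n k : ℕ} (hk : k < (W n).length) : (W n).getD k default = prefixLimit W k := by
  have hpre : ∀ m m', m ≤ m' → W m <+: W m' := fun m m' h =>
    Nat.le_induction (List.prefix_refl _) (fun _ _ ih => ih.trans (hmono _)) m' h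
  have hk' : k < (W (k + 1)).length := by have := hlen (k + 1); omega
  rw [prefixLimit, List.getD_eq_getElem _ _ hk, List.getD_eq_getElem _ _ hk',
    (hpre _ _ (le_max_left n (k + 1))).getElem, (hpre _ _ (le_max_right n (k + 1))).getElem]

end PrefixLimit

/-- The word `left.reverse ++ right`, placed in `ℤ` so that `right` starts at position `0`. -/
structure CentredWord where
  left : List Bool
  right : List Bool

namespace CentredWord

def toList (c : CentredWord) : List Bool :=
  c.left.reverse ++ c.right

def limit (c : ℕ → CentredWord) : ℤ → Bool
  | .ofNat k => prefixLimit (fun n => (c n).right) k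
  | .negSucc k => prefixLimit (fun n => (c n).left) k

@[simp]
theorem length_toList (c : CentredWord) : c.toList.length = c.left.length + c.right.length := by
  simp [toList]

variable {c : ℕ → CentredWord}

theorem limit_natCast (hmono : ∀ n, (c n).right <+: (c (n + 1)).right)
    (hlen : ∀ n, n ≤ (c n).right.length) {n k : ℕ} (hk : k < (c n).right.length) :
    limit c k = (c n).right.getD k false :=
  (getD_eq_prefixLimit (W := fun n => (c n).right) hmono hlen hk).symm

theorem limit_negSucc (hmono : ∀ n, (c n).left <+: (c (n + 1)).left)
    (hlen : ∀ n, n ≤ (c n).left.length) {n k : ℕ} (hk : k < (c n).left.length) :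
    limit c (Int.negSucc k) = (c n).left.getD k false :=
  (getD_eq_prefixLimit (W := fun n => (c n).left) hmono hlen hk).symm

theorem factorAt_limit (hleft : ∀ n, (c n).left <+: (c (n + 1)).left)
    (hright : ∀ n, (c n).right <+: (c (n + 1)).right)
    (hlen_left : ∀ n, n ≤ (c n).left.length) (hlen_right : ∀ n, n ≤ (c n).right.length)
    (n : ℕ) : FactorAt (limit c) (c n).toList (-(c n).left.length) := by
  rw [toList, factorAt_append_iff]
  constructor
  · intro k hk
    rw [List.length_reverse] at hk
    rw [List.getD_reverse _ hk, ← limit_negSucc hleft hlen_left (by omega), Int.negSucc_eq]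
    congr 1
    omega
  · intro k hk
    rw [← limit_natCast hright hlen_right hk]
    congr 1
    simp

variable (pre suf : List Bool → List Bool → List Bool) (τ : ℕ → List Bool)

def stage (β : ℕ → Bool) : ℕ → CentredWord
  | 0 => ⟨[], []⟩
  | n + 1 =>
    ⟨(stage β n).left ++ (pre (τ n) (stage β n).toList).reverse,
      (stage β n).right ++ (suf (τ n) (stage β n).toList ++ [β n])⟩

variable {pre suf τ} {β β' : ℕ → Bool} {ξ : ℤ → Bool}

theorem toList_stage_succ (n : ℕ) :
    (stage pre suf τ β (n + 1)).toList =
      pre (τ n) (stage pre suf τ β n).toList ++ (stage pre suf τ β n).toList ++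
        (suf (τ n) (stage pre suf τ β n).toList ++ [β n]) := by
  simp [stage, toList]

theorem stage_left_prefix_succ (n : ℕ) :
    (stage pre suf τ β n).left <+: (stage pre suf τ β (n + 1)).left :=
  List.prefix_append _ _

theorem stage_right_prefix_succ (n : ℕ) :
    (stage pre suf τ β n).right <+: (stage pre suf τ β (n + 1)).right :=
  List.prefix_append _ _

theorem le_length_right_stage (n : ℕ) : n ≤ (stage pre suf τ β n).right.length := by
  induction n with
  | zero => exact le_rfl
  | succ n ih => simp [stage]; omega

theorem stage_congr {n : ℕ} (h : ∀ m < n, β m = β' m) :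
    stage pre suf τ β n = stage pre suf τ β' n := by
  induction n with
  | zero => rfl
  | succ n ih =>
    rw [stage, stage, ih fun m hm => h m (by omega), h n (by omega)]

theorem limit_stage_eq_bit (n : ℕ) :
    limit (stage pre suf τ β)
      ((stage pre suf τ β n).right.length + (suf (τ n) (stage pre suf τ β n).toList).length : ℕ) =
      β n := by
  rw [limit_natCast stage_right_prefix_succ le_length_right_stage (n := n + 1) (by simp [stage])]
  simp [stage]

theorem injective_limit_stage : Function.Injective fun β => limit (stage pre suf τ β) := by
  intro β β' h
  funext n
  induction n using Nat.strong_induction_on with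
  | _ n ih =>
    rw [← limit_stage_eq_bit (β := β), ← limit_stage_eq_bit (β := β'), stage_congr ih]
    exact congrFun h _

theorem toList_stage_mem_factors (hext : IsBranchingExtender ξ pre suf)
    (hτ : ∀ n, τ n ∈ Factors ξ) (n : ℕ) : (stage pre suf τ β n).toList ∈ Factors ξ := by
  induction n with
  | zero => exact ⟨0, fun k hk => by simp [stage, toList] at hk⟩
  | succ n ih =>
    rw [toList_stage_succ, ← List.append_assoc]
    exact (hext _ _ (hτ n) ih).rightSpecial (β n)

theorem le_length_left_stage (hext : IsBranchingExtender ξ pre suf)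
    (hτ : ∀ n, τ n ∈ Factors ξ) (n : ℕ) : n ≤ (stage pre suf τ β n).left.length := by
  induction n with
  | zero => exact le_rfl
  | succ n ih =>
    have := List.length_pos_iff.mpr
      (hext _ _ (hτ n) (toList_stage_mem_factors hext hτ (β := β) n)).ne_nil
    simp [stage]
    omega

theorem factorAt_limit_stage (hext : IsBranchingExtender ξ pre suf)
    (hτ : ∀ n, τ n ∈ Factors ξ) (n : ℕ) :
    FactorAt (limit (stage pre suf τ β)) (stage pre suf τ β n).toList
      (-(stage pre suf τ β n).left.length) :=
  factorAt_limit stage_left_prefix_succ stage_right_prefix_succ (le_length_left_stage hext hτ)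
    le_length_right_stage n

theorem factors_limit_stage_subset (hext : IsBranchingExtender ξ pre suf)
    (hτ : ∀ n, τ n ∈ Factors ξ) : Factors (limit (stage pre suf τ β)) ⊆ Factors ξ := by
  rintro u ⟨i, hi⟩
  set n := i.natAbs + u.length
  have hleft := le_length_left_stage hext hτ (β := β) n
  have hright := le_length_right_stage (pre := pre) (suf := suf) (τ := τ) (β := β) n
  rw [hi.eq_wordAt]
  refine mem_factors_of_isInfix (toList_stage_mem_factors hext hτ (β := β) n) ?_
  refine (factorAt_limit_stage hext hτ n).wordAt_isInfix (by omega) _ ?_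
  rw [length_toList]
  omega

theorem exists_factorAt_limit_stage (hext : IsBranchingExtender ξ pre suf)
    (hτ : ∀ n, τ n ∈ Factors ξ) (n : ℕ) :
    (∃ j : ℤ, j + (τ n).length ≤ -n ∧ FactorAt (limit (stage pre suf τ β)) (τ n) j) ∧
      ∃ j : ℤ, n ≤ j ∧ FactorAt (limit (stage pre suf τ β)) (τ n) j := by
  have hext_n := hext _ _ (hτ n) (toList_stage_mem_factors hext hτ (β := β) n)
  have hleft := le_length_left_stage hext hτ (β := β) n
  have hright := le_length_right_stage (pre := pre) (suf := suf) (τ := τ) (β := β) n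
  have hocc := factorAt_limit_stage hext hτ (β := β) (n + 1)
  rw [toList_stage_succ, factorAt_append_iff, factorAt_append_iff] at hocc
  obtain ⟨⟨hpre, -⟩, hsuf⟩ := hocc
  have hlen : ((stage pre suf τ β (n + 1)).left.length : ℤ) =
      (stage pre suf τ β n).left.length + (pre (τ n) (stage pre suf τ β n).toList).length := by
    simp [stage]
  constructor
  · obtain ⟨j, -, hj, hocc⟩ := hpre.exists_factorAt_of_isInfix hext_n.isInfix_left
    exact ⟨j, by omega, hocc⟩
  · obtain ⟨j, hj, -, hocc⟩ :=
      hsuf.exists_factorAt_of_isInfix (hext_n.isInfix_right.trans (List.prefix_append _ _).isInfix)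
    refine ⟨j, ?_, hocc⟩
    rw [List.length_append, length_toList] at hj
    omega

theorem recurrent_limit_stage (hext : IsBranchingExtender ξ pre suf)
    (hτ : ∀ n, τ n ∈ Factors ξ) (hsched : ∀ u ∈ Factors ξ, ∀ N, ∃ n, N ≤ n ∧ τ n = u) :
    Recurrent (limit (stage pre suf τ β)) ∧ Factors (limit (stage pre suf τ β)) = Factors ξ := by
  have hocc : ∀ u ∈ Factors ξ, ∀ i : ℤ,
      (∃ j, j + u.length ≤ i ∧ FactorAt (limit (stage pre suf τ β)) u j) ∧
        ∃ j, i ≤ j ∧ FactorAt (limit (stage pre suf τ β)) u j := by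
    intro u hu i
    obtain ⟨n, hn, rfl⟩ := hsched u hu i.natAbs
    obtain ⟨⟨j, hj, hocc⟩, ⟨j', hj', hocc'⟩⟩ := exists_factorAt_limit_stage hext hτ (β := β) n
    exact ⟨⟨j, by omega, hocc⟩, ⟨j', by omega, hocc'⟩⟩
  have hfac : Factors (limit (stage pre suf τ β)) = Factors ξ :=
    (factors_limit_stage_subset hext hτ).antisymm fun u hu =>
      let ⟨j, _, hj⟩ := (hocc u hu 0).2
      ⟨j, hj⟩
  exact ⟨fun u hu => hocc u (hfac ▸ hu), hfac⟩

end CentredWord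

theorem injective_family_of_recurrent_words (ξ : ℤ → Bool)
    (hrec : Recurrent ξ) (hnp : ¬ BiPeriodic ξ)
    (f : ℕ → List Bool) (hf : Set.range f = Factors ξ) :
    ∃ g : Set ℕ → (ℤ → Bool),
      (∀ A : Set ℕ, Recurrent (g A) ∧ Factors (g A) = Factors ξ) ∧
      Function.Injective g ∧
      Cardinal.continuum ≤
        Cardinal.mk {ζ : ℤ → Bool // Recurrent ζ ∧ Factors ζ = Factors ξ} := by
  classical
  obtain ⟨pre, suf, hext⟩ := hrec.exists_isBranchingExtender hnp
  set τ : ℕ → List Bool := fun n => f n.unpair.1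
  have hτ : ∀ n, τ n ∈ Factors ξ := fun n => hf ▸ Set.mem_range_self _
  have hsched : ∀ u ∈ Factors ξ, ∀ N, ∃ n, N ≤ n ∧ τ n = u := by
    rintro u hu N
    obtain ⟨k, rfl⟩ := hf.symm ▸ hu
    exact ⟨Nat.pair k N, Nat.right_le_pair k N, by simp [τ]⟩
  set g : Set ℕ → ℤ → Bool := fun A =>
    CentredWord.limit (CentredWord.stage pre suf τ fun n => decide (n ∈ A))
  have hg : ∀ A, Recurrent (g A) ∧ Factors (g A) = Factors ξ := fun A =>
    CentredWord.recurrent_limit_stage hext hτ hsched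
  have hinj : Function.Injective g := fun A B h =>
    Set.ext fun n => by simpa using congrFun (CentredWord.injective_limit_stage h) n
  refine ⟨g, hg, hinj, ?_⟩
  calc Cardinal.continuum = Cardinal.mk (Set ℕ) := by simp [Cardinal.mk_set]
    _ ≤ _ := Cardinal.mk_le_of_injective (f := fun A => ⟨g A, hg A⟩) fun A B h =>
      hinj (congrArg Subtype.val h)
end
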